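/- For set compositions of [n], define 𝔭^π⃗ = Σ_{A : #A_π⃗ = 1} 𝔰_A (the basic hypergraphic polytope of π⃗). Then for set compositions π⃗, τ⃗, the face of 𝔭^π⃗ corresponding to a coloring of composition type τ⃗ is a point if and only if π⃗ ⪯ τ⃗ in the SC preorder; consequently Υ(𝔭^π⃗) = Σ_{τ⃗ ⪰ π⃗} M_τ⃗ in the monomial basis of word quasisymmetric functions. -/

import Mathlib

open Pointwise
open scoped Classical

/-- A function `g : Fin n → Fin n` is *packed* if its set of used colors is a lower set;
packed functions encode exactly the set compositions of `[n]` (the blocks, in order, are the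
level sets of `g`). -/
def IsPacked {n : ℕ} (g : Fin n → Fin n) : Prop :=
  ∀ c : Fin n, (∃ i, g i = c) → ∀ d : Fin n, d ≤ c → ∃ i, g i = d

/-- Set compositions of `[n]`, encoded as packed functions. -/
abbrev SetComp (n : ℕ) := {g : Fin n → Fin n // IsPacked g}

/-- The set of minima `A_π⃗` of `A` in the set composition encoded by `g` is a singleton. -/
def UniqMin {n : ℕ} (g : Fin n → Fin n) (A : Finset (Fin n)) : Prop :=
  ∃! j, j ∈ A ∧ ∀ k ∈ A, g j ≤ g k

/-- The SC preorder: `π ⪯ τ` iff `#A_π⃗ = 1` implies `#A_τ⃗ = 1` for all nonempty `A`. -/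
def SCle {n : ℕ} (π τ : SetComp n) : Prop :=
  ∀ A : Finset (Fin n), A.Nonempty → UniqMin π.1 A → UniqMin τ.1 A

/-- The simplex `𝔰_A = conv{e_j : j ∈ A}` in `ℝⁿ`. -/
noncomputable def smplx {n : ℕ} (A : Finset (Fin n)) : Set (Fin n → ℝ) :=
  convexHull ℝ ((fun j => Pi.single j (1 : ℝ)) '' ↑A)

/-- The face of a polytope `S` minimizing the linear functional `F`. -/
def faceMin {n : ℕ} (S : Set (Fin n → ℝ)) (F : (Fin n → ℝ) → ℝ) : Set (Fin n → ℝ) :=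
  {x ∈ S | ∀ y ∈ S, F x ≤ F y}

/-- The basic hypergraphic polytope `𝔭^π⃗ = ∑_{A : #A_π⃗ = 1} 𝔰_A`. -/
noncomputable def basicHP {n : ℕ} (π : SetComp n) : Set (Fin n → ℝ) :=
  ∑ A ∈ Finset.univ.filter
      (fun A : Finset (Fin n) => A.Nonempty ∧ UniqMin π.1 A), smplx A

/-! The face of a Minkowski sum minimizing a linear functional `c ⬝ᵥ ·` is the Minkowski sum of
the faces of the summands, and the face of the simplex `𝔰_A` is the simplex spanned by the
`c`-minimal elements of `A`. The singletons are exactly the additive units of the monoid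
`(Set E, +)`, so a Minkowski sum is a point iff every summand is. Hence the face of `𝔭^π⃗` is a
point iff every `A` with `#A_π⃗ = 1` has a unique `c`-minimal element, which for `c` of
composition type `τ⃗` is the statement `π⃗ ⪯ τ⃗`. Since every word has exactly one composition
type, the coefficientwise identity for `Υ(𝔭^π⃗)` follows. -/

section Faces

variable {n : ℕ}

theorem faceMin_add {F : (Fin n → ℝ) → ℝ} (hF : ∀ x y, F (x + y) = F x + F y)
    (S T : Set (Fin n → ℝ)) : faceMin (S + T) F = faceMin S F + faceMin T F := by
  ext x
  constructor
  · rintro ⟨⟨s, hs, t, ht, rfl⟩, hmin⟩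
    refine ⟨s, ⟨hs, fun s' hs' => ?_⟩, t, ⟨ht, fun t' ht' => ?_⟩, rfl⟩
    · have := hmin (s' + t) (Set.add_mem_add hs' ht)
      rw [hF, hF] at this
      linarith
    · have := hmin (s + t') (Set.add_mem_add hs ht')
      rw [hF, hF] at this
      linarith
  · rintro ⟨s, ⟨hs, hs_min⟩, t, ⟨ht, ht_min⟩, rfl⟩
    refine ⟨Set.add_mem_add hs ht, ?_⟩
    rintro _ ⟨s', hs', t', ht', rfl⟩
    rw [hF, hF]
    linarith [hs_min s' hs', ht_min t' ht']

theorem faceMin_sum {F : (Fin n → ℝ) → ℝ} (hF : ∀ x y, F (x + y) = F x + F y) {ι : Type*}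
    (s : Finset ι) (S : ι → Set (Fin n → ℝ)) :
    faceMin (∑ i ∈ s, S i) F = ∑ i ∈ s, faceMin (S i) F := by
  induction s using Finset.induction_on with
  | empty => ext x; simp +contextual [faceMin]
  | insert i s hi ih => rw [Finset.sum_insert hi, Finset.sum_insert hi, faceMin_add hF, ih]

end Faces

noncomputable def minSet {ι α : Type*} [Preorder α] (f : ι → α) (A : Finset ι) : Finset ι :=
  A.filter fun j => ∀ k ∈ A, f j ≤ f k

theorem mem_minSet {ι α : Type*} [Preorder α] {f : ι → α} {A : Finset ι} {j : ι} :
    j ∈ minSet f A ↔ j ∈ A ∧ ∀ k ∈ A, f j ≤ f k :=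
  Finset.mem_filter

theorem mem_minSet_iff_eq {ι α : Type*} [PartialOrder α] {f : ι → α} {A : Finset ι} {i j : ι}
    (hjA : j ∈ A) (hj : ∀ k ∈ A, f j ≤ f k) (hiA : i ∈ A) : i ∈ minSet f A ↔ f i = f j := by
  rw [mem_minSet]
  exact ⟨fun hi => le_antisymm (hi.2 j hjA) (hj i hiA), fun hi => ⟨hiA, fun k hk => hi ▸ hj k hk⟩⟩

theorem minSet_congr {ι α β : Type*} [Preorder α] [Preorder β] {f : ι → α} {f' : ι → β}
    (h : ∀ i j, f i ≤ f j ↔ f' i ≤ f' j) (A : Finset ι) : minSet f A = minSet f' A := by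
  ext j
  simp only [mem_minSet, h]

section Simplex

variable {n : ℕ}

theorem mem_smplx {A : Finset (Fin n)} {x : Fin n → ℝ} :
    x ∈ smplx A ↔ (∀ i, 0 ≤ x i) ∧ (∀ i ∉ A, x i = 0) ∧ ∑ i, x i = 1 := by
  constructor
  · intro hx
    refine convexHull_min (t := {y | (∀ i, 0 ≤ y i) ∧ (∀ i ∉ A, y i = 0) ∧ ∑ i, y i = 1})
      ?_ ?_ hx
    · rintro _ ⟨j, hj, rfl⟩
      refine ⟨fun i => ?_, fun i hi => ?_, by simp⟩
      · by_cases h : i = j <;> simp [h]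
      · exact Pi.single_eq_of_ne (fun h : i = j => hi (h ▸ hj)) _
    · intro u ⟨hu0, huA, hu1⟩ v ⟨hv0, hvA, hv1⟩ a b ha hb hab
      refine ⟨fun i => add_nonneg (mul_nonneg ha (hu0 i)) (mul_nonneg hb (hv0 i)),
        fun i hi => by simp [huA i hi, hvA i hi], ?_⟩
      simp only [Pi.add_apply, Pi.smul_apply, smul_eq_mul, Finset.sum_add_distrib,
        ← Finset.mul_sum, hu1, hv1, hab, mul_one]
  · rintro ⟨hx0, hxA, hx1⟩
    have hx1A : ∑ j ∈ A, x j = 1 := by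
      rw [← hx1, Finset.sum_subset A.subset_univ fun i _ hi => hxA i hi]
    have hx : A.centerMass x (fun j => Pi.single j (1 : ℝ)) = x := by
      rw [Finset.centerMass_eq_of_sum_1 _ _ hx1A]
      ext i
      by_cases hi : i ∈ A <;> simp [Finset.sum_apply, Pi.single_apply, hi, hxA]
    rw [← hx]
    exact A.centerMass_mem_convexHull (fun i _ => hx0 i) (by rw [hx1A]; norm_num)
      (fun i hi => Set.mem_image_of_mem _ hi)

theorem exists_smplx_eq_singleton_iff (B : Finset (Fin n)) :
    (∃ x, smplx B = {x}) ↔ ∃ j, B = {j} := by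
  have hinj : Function.Injective fun j : Fin n => Pi.single j (1 : ℝ) := fun j k h => by
    simpa [Pi.single_apply] using (congr_fun h j).symm
  simp only [smplx, convexHull_eq_singleton, Set.exists_eq_singleton_iff_nonempty_subsingleton,
    Set.image_nonempty, hinj.subsingleton_image_iff, ← Finset.coe_eq_singleton]

theorem single_mem_smplx {A : Finset (Fin n)} {j : Fin n} (hj : j ∈ A) :
    Pi.single j 1 ∈ smplx A :=
  subset_convexHull ℝ _ (Set.mem_image_of_mem _ hj)

theorem dotProduct_sub_eq_sum_of_mem_smplx {A : Finset (Fin n)} {x : Fin n → ℝ}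
    (hx : x ∈ smplx A) (c : Fin n → ℝ) (m : ℝ) :
    c ⬝ᵥ x - m = ∑ i ∈ A, (c i - m) * x i := by
  obtain ⟨-, hxA, hx1⟩ := mem_smplx.1 hx
  rw [Finset.sum_subset A.subset_univ (fun i _ hi => by simp [hxA i hi])]
  simp only [dotProduct, sub_mul, Finset.sum_sub_distrib, ← Finset.mul_sum, hx1, mul_one]

theorem faceMin_smplx (c : Fin n → ℝ) (A : Finset (Fin n)) :
    faceMin (smplx A) (c ⬝ᵥ ·) = smplx (minSet c A) := by
  rcases A.eq_empty_or_nonempty with rfl | hA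
  · simp [faceMin, smplx, minSet]
  obtain ⟨j, hjA, hj⟩ := A.exists_min_image c hA
  have hterm_nonneg : ∀ x ∈ smplx A, ∀ i ∈ A, 0 ≤ (c i - c j) * x i := fun x hx i hi =>
    mul_nonneg (sub_nonneg.2 (hj i hi)) ((mem_smplx.1 hx).1 i)
  ext x
  constructor
  · rintro ⟨hx, hx_min⟩
    have hzero : ∀ i ∈ A, (c i - c j) * x i = 0 := by
      refine (Finset.sum_eq_zero_iff_of_nonneg (hterm_nonneg x hx)).1
        (le_antisymm ?_ (Finset.sum_nonneg (hterm_nonneg x hx)))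
      have := hx_min _ (single_mem_smplx hjA)
      simp only [dotProduct_single, mul_one] at this
      rw [← dotProduct_sub_eq_sum_of_mem_smplx hx]
      linarith
    obtain ⟨hx0, hxA, hx1⟩ := mem_smplx.1 hx
    refine mem_smplx.2 ⟨hx0, fun i hi => ?_, hx1⟩
    by_cases hiA : i ∈ A
    · exact (mul_eq_zero.1 (hzero i hiA)).resolve_left
        (sub_ne_zero.2 (mt (mem_minSet_iff_eq hjA hj hiA).2 hi))
    · exact hxA i hiA
  · intro hx
    have hxA : x ∈ smplx A :=
      convexHull_mono (Set.image_mono fun i hi => (mem_minSet.1 hi).1) hx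
    refine ⟨hxA, fun y hy => ?_⟩
    have hx_val : c ⬝ᵥ x - c j = 0 := by
      rw [dotProduct_sub_eq_sum_of_mem_smplx hxA]
      refine Finset.sum_eq_zero fun i hi => ?_
      by_cases him : i ∈ minSet c A
      · rw [(mem_minSet_iff_eq hjA hj hi).1 him, sub_self, zero_mul]
      · rw [(mem_smplx.1 hx).2.1 i him, mul_zero]
    have hy_val := dotProduct_sub_eq_sum_of_mem_smplx hy c (c j)
    linarith [Finset.sum_nonneg (hterm_nonneg y hy)]

end Simplex

section BasicHP

variable {n : ℕ}

theorem faceMin_basicHP (π : SetComp n) (c : Fin n → ℝ) :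
    faceMin (basicHP π) (c ⬝ᵥ ·) =
      ∑ A ∈ Finset.univ.filter (fun A : Finset (Fin n) => A.Nonempty ∧ UniqMin π.1 A),
        smplx (minSet c A) := by
  rw [basicHP, faceMin_sum (dotProduct_add c)]
  exact Finset.sum_congr rfl fun A _ => faceMin_smplx c A

theorem exists_faceMin_basicHP_eq_singleton_iff (π : SetComp n) (c : Fin n → ℝ) :
    (∃ x, faceMin (basicHP π) (c ⬝ᵥ ·) = {x}) ↔
      ∀ A : Finset (Fin n), A.Nonempty → UniqMin π.1 A → ∃ j, minSet c A = {j} := by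
  simp only [faceMin_basicHP, ← Set.isAddUnit_iff_singleton, IsAddUnit.sum_iff,
    Finset.mem_filter, Finset.mem_univ, true_and, and_imp]
  simp only [Set.isAddUnit_iff_singleton, exists_smplx_eq_singleton_iff]

theorem uniqMin_iff_exists_minSet_eq_singleton (g : Fin n → Fin n) (A : Finset (Fin n)) :
    UniqMin g A ↔ ∃ j, minSet g A = {j} := by
  simp only [UniqMin, ExistsUnique, Finset.eq_singleton_iff_unique_mem, mem_minSet]

theorem exists_faceMin_basicHP_eq_singleton_iff_scle (π τ : SetComp n) (c : Fin n → ℝ)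
    (hc : ∀ i j, c i ≤ c j ↔ τ.1 i ≤ τ.1 j) :
    (∃ x, faceMin (basicHP π) (c ⬝ᵥ ·) = {x}) ↔ SCle π τ := by
  simp only [exists_faceMin_basicHP_eq_singleton_iff, SCle,
    uniqMin_iff_exists_minSet_eq_singleton, minSet_congr hc]

end BasicHP

section Packing

variable {n : ℕ}

theorem IsPacked.Iio_eq_image {g : Fin n → Fin n} (hg : IsPacked g) (i : Fin n) :
    Set.Iio (g i) = g '' {j | g j < g i} := by
  ext d
  constructor
  · intro hd
    obtain ⟨j, rfl⟩ := hg (g i) ⟨i, rfl⟩ d hd.le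
    exact ⟨j, hd, rfl⟩
  · rintro ⟨j, hj, rfl⟩
    exact hj

theorem IsPacked.eq_of_le_iff {g h : Fin n → Fin n} (hg : IsPacked g) (hh : IsPacked h)
    (hgh : ∀ i j, g i ≤ g j ↔ h i ≤ h j) : g = h := by
  -- Strong induction on the value `g i`: `Iio (g i)` is the image of the indices below `i`.
  have hlt : ∀ i j, g j < g i ↔ h j < h i := fun i j => by simp only [lt_iff_not_ge, hgh]
  suffices ∀ c i, g i = c → g i = h i from funext fun i => this _ i rfl
  intro c
  induction c using WellFoundedLT.induction with
  | _ c ih =>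
    rintro i rfl
    have hIio : Set.Iio (g i) = Set.Iio (h i) := by
      rw [hg.Iio_eq_image, hh.Iio_eq_image]
      calc g '' {j | g j < g i} = h '' {j | g j < g i} :=
            Set.image_congr fun j hj => ih (g j) hj j rfl
        _ = h '' {j | h j < h i} := by simp only [hlt i]
    exact le_antisymm (Set.Iio_subset_Iio_iff.1 hIio.le) (Set.Iio_subset_Iio_iff.1 hIio.ge)

-- `pack w i` is the rank of `w i` among the distinct values of `w`.
noncomputable def pack (w : Fin n → ℕ) (i : Fin n) : Fin n :=
  Fin.castLE (Finset.card_image_le.trans_eq (Finset.card_fin n))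
    (((Finset.univ.image w).orderIsoOfFin rfl).symm
      ⟨w i, Finset.mem_image_of_mem w (Finset.mem_univ i)⟩)

theorem pack_le_pack_iff (w : Fin n → ℕ) (i j : Fin n) : pack w i ≤ pack w j ↔ w i ≤ w j := by
  simp only [pack, Fin.castLE_le_castLE_iff, OrderIso.le_iff_le, Subtype.mk_le_mk]

theorem isPacked_pack (w : Fin n → ℕ) : IsPacked (pack w) := by
  rintro _ ⟨i, rfl⟩ d hd
  set e := (Finset.univ.image w).orderIsoOfFin rfl
  have hd' : (d : ℕ) < (Finset.univ.image w).card := lt_of_le_of_lt hd (e.symm _).isLt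
  obtain ⟨j, -, hj⟩ := Finset.mem_image.1 (e ⟨d, hd'⟩).2
  refine ⟨j, Fin.ext ?_⟩
  have hj' : (⟨w j, Finset.mem_image_of_mem w (Finset.mem_univ j)⟩ : Finset.univ.image w) =
      e ⟨d, hd'⟩ := Subtype.ext hj
  simp only [pack, Fin.val_castLE]
  rw [hj', e.symm_apply_apply]

theorem existsUnique_setComp_le_iff (w : Fin n → ℕ) :
    ∃! τ : SetComp n, ∀ i j, w i ≤ w j ↔ τ.1 i ≤ τ.1 j :=
  ⟨⟨pack w, isPacked_pack w⟩, fun i j => (pack_le_pack_iff w i j).symm, fun τ hτ =>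
    Subtype.ext (τ.2.eq_of_le_iff (isPacked_pack w) fun i j => by rw [← hτ, pack_le_pack_iff])⟩

end Packing

/-- The face of the basic hypergraphic polytope `𝔭^π⃗` corresponding to a
coloring of composition type `τ⃗` is a point iff `π⃗ ⪯ τ⃗` in the SC preorder; consequently
`Υ(𝔭^π⃗) = ∑_{τ⃗ ⪰ π⃗} M_τ⃗`, stated coefficientwise on words `w : Fin n → ℕ` (the
coefficient of `w` in `M_τ⃗` is `1` iff `w` has composition type `τ⃗`, i.e. induces the same
total preorder as `τ⃗`). -/
theorem stmt18 {n : ℕ} (π : SetComp n) :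
    (∀ τ : SetComp n,
      (∃ x : Fin n → ℝ,
          faceMin (basicHP π) (fun x => ∑ i, ((τ.1 i : ℕ) : ℝ) * x i) = {x}) ↔
        SCle π τ) ∧
      ∀ w : Fin n → ℕ,
        (if ∃ x : Fin n → ℝ,
            faceMin (basicHP π) (fun x => ∑ i, (w i : ℝ) * x i) = {x}
          then (1 : ℚ) else 0) =
          ∑ τ ∈ Finset.univ.filter (fun τ : SetComp n => SCle π τ),
            (if ∀ i j : Fin n, w i ≤ w j ↔ τ.1 i ≤ τ.1 j then (1 : ℚ) else 0) := by
  refine ⟨fun τ => exists_faceMin_basicHP_eq_singleton_iff_scle π τ _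
    fun i j => Nat.cast_le.trans Fin.le_iff_val_le_val.symm, fun w => ?_⟩
  obtain ⟨τ, hτ, hτ_unique⟩ := existsUnique_setComp_le_iff w
  have hw_type : ∀ σ : SetComp n, (∀ i j, w i ≤ w j ↔ σ.1 i ≤ σ.1 j) ↔ σ = τ :=
    fun σ => ⟨hτ_unique σ, fun h => h ▸ hτ⟩
  simp only [hw_type, Finset.sum_ite_eq', Finset.mem_filter, Finset.mem_univ, true_and]
  exact if_congr (exists_faceMin_basicHP_eq_singleton_iff_scle π τ _
    fun i j => Nat.cast_le.trans (hτ i j)) rfl rfl
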